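/- arXiv:2405.12888 — 5 statements merged into one kernel-verified Lean document; each statement's English description precedes it below -/
import Mathlib

section
/- Let τ > 0 and let h : ℝ × ℝ^D × ℝ^D → ℝ be conserved along every solution of the ODE θ̈ + τ θ̇ = 0. Then for all t, θ, v one has h(t, θ, v) = H(θ + v/τ, v·exp(τt)), where H(a, b) := h(0, a − b/τ, b). -/
/-!
The curves `θ(s) = a - τ⁻¹ e^{-τs} b`, `θ̇(s) = e^{-τs} b` solve `θ̈ + τ θ̇ = 0`, and the one
with `a = θ + v/τ`, `b = e^{τt} v` passes through `(θ, v)` at time `t`; comparing `h` at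
times `t` and `0` along it gives the formula.
-/

open Real

noncomputable section

variable {E : Type*} [NormedAddCommGroup E] [NormedSpace ℝ E] (τ : ℝ)

def dampedVel (b : E) (s : ℝ) : E := exp (-(τ * s)) • b

def dampedPos (a b : E) (s : ℝ) : E := a - τ⁻¹ • dampedVel τ b s

theorem hasDerivAt_dampedVel (b : E) (s : ℝ) :
    HasDerivAt (dampedVel τ b) (-(τ • dampedVel τ b s)) s := by
  refine (((hasDerivAt_id s).const_mul τ).neg.exp.smul_const b).congr_deriv ?_
  simp only [dampedVel, id]
  module

variable {τ}

theorem hasDerivAt_dampedPos (hτ : τ ≠ 0) (a b : E) (s : ℝ) :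
    HasDerivAt (dampedPos τ a b) (dampedVel τ b s) s := by
  have h := ((hasDerivAt_dampedVel τ b s).const_smul τ⁻¹).const_sub a
  rwa [smul_neg, neg_neg, inv_smul_smul₀ hτ] at h

theorem dampedVel_zero (b : E) : dampedVel τ b 0 = b := by
  simp [dampedVel]

theorem dampedVel_exp_smul (v : E) (t : ℝ) : dampedVel τ (exp (τ * t) • v) t = v := by
  simp [dampedVel, smul_smul, ← exp_add]

theorem eq_apply_zero_of_conserved (hτ : τ ≠ 0) (h : ℝ → E → E → ℝ)
    (hc : ∀ θ dθ : ℝ → E, (∀ t, HasDerivAt θ (dθ t) t) →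
      (∀ t, HasDerivAt dθ (-(τ • dθ t)) t) → ∀ t s : ℝ, h t (θ t) (dθ t) = h s (θ s) (dθ s))
    (t : ℝ) (θ v : E) :
    h t θ v = h 0 (θ + τ⁻¹ • v - τ⁻¹ • exp (τ * t) • v) (exp (τ * t) • v) := by
  have key := hc (dampedPos τ (θ + τ⁻¹ • v) (exp (τ * t) • v)) (dampedVel τ (exp (τ * t) • v))
    (hasDerivAt_dampedPos hτ _ _) (hasDerivAt_dampedVel τ _) t 0
  simpa only [dampedPos, dampedVel_exp_smul, dampedVel_zero, add_sub_cancel_right] using key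

end

/-- Structure theorem (momentum case): if `h (t, θ, v)` is conserved along every solution of
the ODE `θ̈ + τ θ̇ = 0` (with `τ > 0`), then
`h (t, θ, v) = H (θ + v/τ, v · exp (τ t))` where `H (a, b) = h (0, a - b/τ, b)`.
A solution is encoded by a curve `θ` with derivative `dθ` satisfying `dθ' = -τ • dθ`. -/
theorem stmt1 {D : ℕ} (τ : ℝ) (hτ : 0 < τ)
    (h : ℝ → (Fin D → ℝ) → (Fin D → ℝ) → ℝ)
    (hc : ∀ (θ dθ : ℝ → Fin D → ℝ),
      (∀ t, HasDerivAt θ (dθ t) t) →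
      (∀ t, HasDerivAt dθ (-(τ • dθ t)) t) →
      ∀ t s : ℝ, h t (θ t) (dθ t) = h s (θ s) (dθ s)) :
    ∀ (t : ℝ) (θ v : Fin D → ℝ),
      h t θ v =
        h 0 (fun i => (θ i + v i / τ) - (v i * Real.exp (τ * t)) / τ)
          (fun i => v i * Real.exp (τ * t)) := by
  intro t θ v
  convert eq_apply_zero_of_conserved hτ.ne' h hc t θ v using 2 <;> ext i
  · simp only [Pi.sub_apply, Pi.add_apply, Pi.smul_apply, smul_eq_mul]
    ring
  · simp only [Pi.smul_apply, smul_eq_mul, mul_comm]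
end

section
/- Let u₁, u₂, v₁, v₂ : ℝ → ℝ be C² functions satisfying ü_i = −∂E/∂u_i and v̈_i = −∂E/∂v_i where E(u₁,u₂,v₁,v₂) = ℓ(u₁v₁ + u₂v₂) for a C¹ function ℓ. Then the quantity h(t) := u₁(t)u̇₂(t) − u̇₁(t)u₂(t) + v₁(t)v̇₂(t) − v̇₁(t)v₂(t) is constant in t. -/
/-!
The quantity is the sum of the Wronskians `u₁ u̇₂ - u̇₁ u₂` and `v₁ v̇₂ - v̇₁ v₂`. The derivative of
a Wronskian `x ẏ - ẋ y` is `x ÿ - ẍ y`; along the flow `üᵢ = -ℓ'(φ) vᵢ` and `v̈ᵢ = -ℓ'(φ) uᵢ`, so the two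
derivatives are `-ℓ'(φ) (u₁ v₂ - v₁ u₂)` and `-ℓ'(φ) (v₁ u₂ - u₁ v₂)`, which cancel.
-/

theorem hasDerivAt_wronskian {𝕜 : Type*} [NontriviallyNormedField 𝕜]
    {x y x' y' x'' y'' : 𝕜 → 𝕜} {t : 𝕜}
    (hx : HasDerivAt x (x' t) t) (hy : HasDerivAt y (y' t) t)
    (hx' : HasDerivAt x' (x'' t) t) (hy' : HasDerivAt y' (y'' t) t) :
    HasDerivAt (fun s => x s * y' s - x' s * y s) (x t * y'' t - x'' t * y t) t :=
  ((hx.mul hy').sub (hx'.mul hy)).congr_deriv (by ring)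

theorem stmt4_general (ℓ : ℝ → ℝ)
    (u₁ u₂ v₁ v₂ u₁' u₂' v₁' v₂' u₁'' u₂'' v₁'' v₂'' : ℝ → ℝ)
    (hu₁ : ∀ t, HasDerivAt u₁ (u₁' t) t) (hu₂ : ∀ t, HasDerivAt u₂ (u₂' t) t)
    (hv₁ : ∀ t, HasDerivAt v₁ (v₁' t) t) (hv₂ : ∀ t, HasDerivAt v₂ (v₂' t) t)
    (hu₁' : ∀ t, HasDerivAt u₁' (u₁'' t) t) (hu₂' : ∀ t, HasDerivAt u₂' (u₂'' t) t)
    (hv₁' : ∀ t, HasDerivAt v₁' (v₁'' t) t) (hv₂' : ∀ t, HasDerivAt v₂' (v₂'' t) t)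
    (ode₁ : ∀ t, u₁'' t = -(deriv ℓ (u₁ t * v₁ t + u₂ t * v₂ t) * v₁ t))
    (ode₂ : ∀ t, u₂'' t = -(deriv ℓ (u₁ t * v₁ t + u₂ t * v₂ t) * v₂ t))
    (ode₃ : ∀ t, v₁'' t = -(deriv ℓ (u₁ t * v₁ t + u₂ t * v₂ t) * u₁ t))
    (ode₄ : ∀ t, v₂'' t = -(deriv ℓ (u₁ t * v₁ t + u₂ t * v₂ t) * u₂ t)) :
    ∀ t s : ℝ,
      u₁ t * u₂' t - u₁' t * u₂ t + v₁ t * v₂' t - v₁' t * v₂ t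
        = u₁ s * u₂' s - u₁' s * u₂ s + v₁ s * v₂' s - v₁' s * v₂ s := by
  have hderiv : ∀ t, HasDerivAt
      (fun t => u₁ t * u₂' t - u₁' t * u₂ t + v₁ t * v₂' t - v₁' t * v₂ t) 0 t := by
    intro t
    have hsum := ((hasDerivAt_wronskian (hu₁ t) (hu₂ t) (hu₁' t) (hu₂' t)).add
      (hasDerivAt_wronskian (hv₁ t) (hv₂ t) (hv₁' t) (hv₂' t))).congr_deriv
      (show _ = (0 : ℝ) by rw [ode₁, ode₂, ode₃, ode₄]; ring)
    exact hsum.congr_of_eventuallyEq (.of_forall fun s => by simp only [Pi.add_apply]; ring)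
  exact is_const_of_deriv_eq_zero (fun t => (hderiv t).differentiableAt) (fun t => (hderiv t).deriv)

/-- For the Euclidean momentum flow (τ = 0) of a two-layer linear network in dimension 1
with 2 hidden neurons: if `ü_i = -∂E/∂u_i`, `v̈_i = -∂E/∂v_i` with
`E (u₁,u₂,v₁,v₂) = ℓ (u₁v₁ + u₂v₂)` and `ℓ` C¹, then
`u₁ u̇₂ - u̇₁ u₂ + v₁ v̇₂ - v̇₁ v₂` is constant in time. -/
theorem stmt4 (ℓ : ℝ → ℝ) (hℓ : ContDiff ℝ 1 ℓ)
    (u₁ u₂ v₁ v₂ u₁' u₂' v₁' v₂' u₁'' u₂'' v₁'' v₂'' : ℝ → ℝ)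
    (hu₁ : ∀ t, HasDerivAt u₁ (u₁' t) t) (hu₂ : ∀ t, HasDerivAt u₂ (u₂' t) t)
    (hv₁ : ∀ t, HasDerivAt v₁ (v₁' t) t) (hv₂ : ∀ t, HasDerivAt v₂ (v₂' t) t)
    (hu₁' : ∀ t, HasDerivAt u₁' (u₁'' t) t) (hu₂' : ∀ t, HasDerivAt u₂' (u₂'' t) t)
    (hv₁' : ∀ t, HasDerivAt v₁' (v₁'' t) t) (hv₂' : ∀ t, HasDerivAt v₂' (v₂'' t) t)
    (ode₁ : ∀ t, u₁'' t = -(deriv ℓ (u₁ t * v₁ t + u₂ t * v₂ t) * v₁ t))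
    (ode₂ : ∀ t, u₂'' t = -(deriv ℓ (u₁ t * v₁ t + u₂ t * v₂ t) * v₂ t))
    (ode₃ : ∀ t, v₁'' t = -(deriv ℓ (u₁ t * v₁ t + u₂ t * v₂ t) * u₁ t))
    (ode₄ : ∀ t, v₂'' t = -(deriv ℓ (u₁ t * v₁ t + u₂ t * v₂ t) * u₂ t)) :
    ∀ t s : ℝ,
      u₁ t * u₂' t - u₁' t * u₂ t + v₁ t * v₂' t - v₁' t * v₂ t
        = u₁ s * u₂' s - u₁' s * u₂ s + v₁ s * v₂' s - v₁' s * v₂ s :=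
  stmt4_general ℓ u₁ u₂ v₁ v₂ u₁' u₂' v₁' v₂' u₁'' u₂'' v₁'' v₂'' hu₁ hu₂ hv₁ hv₂ hu₁' hu₂' hv₁'
    hv₂' ode₁ ode₂ ode₃ ode₄
end

section
/- Let U : ℝ → ℝ^{n×r}, V : ℝ → ℝ^{m×r} be C² matrix-valued curves, τ : ℝ → ℝ smooth, and E(U,V) = L(U Vᵀ) for a C¹ function L : ℝ^{n×m} → ℝ. Suppose Ü + τ(t)U̇ = −∇_U E(U,V) and V̈ + τ(t)V̇ = −∇_V E(U,V). Then for any skew-symmetric matrix A ∈ ℝ^{r×r}, the function t ↦ exp(∫^t τ(s)ds)·(⟨U̇, UA⟩ + ⟨V̇, VA⟩) is constant, where ⟨M,N⟩ = Tr(MᵀN). -/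
open Matrix

lemma trace_tm_sum {a b : ℕ} (X Y : Matrix (Fin a) (Fin b) ℝ) :
    Matrix.trace (Xᵀ * Y) = ∑ i, ∑ j, X i j * Y i j := by
  simp only [Matrix.trace, Matrix.mul_apply, Matrix.diag, Matrix.transpose_apply]
  exact Finset.sum_comm

lemma trace_symm_skew {a : ℕ} (S A : Matrix (Fin a) (Fin a) ℝ)
    (hS : Sᵀ = S) (hA : Aᵀ = -A) : Matrix.trace (S * A) = 0 := by
  have h : Matrix.trace (S * A) = - Matrix.trace (S * A) := by
    conv_lhs => rw [← Matrix.trace_transpose, Matrix.transpose_mul, hA, hS,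
      Matrix.neg_mul, Matrix.trace_neg, Matrix.trace_mul_comm]
  linarith

lemma trace_skew_self {a b : ℕ} (X : Matrix (Fin a) (Fin b) ℝ)
    (A : Matrix (Fin b) (Fin b) ℝ) (hA : Aᵀ = -A) :
    Matrix.trace (Xᵀ * (X * A)) = 0 := by
  rw [← Matrix.mul_assoc]
  exact trace_symm_skew _ _ (by rw [Matrix.transpose_mul, Matrix.transpose_transpose]) hA

lemma trace_cross {n m r : ℕ} (P : Matrix (Fin n) (Fin m) ℝ)
    (U : Matrix (Fin n) (Fin r) ℝ) (V : Matrix (Fin m) (Fin r) ℝ)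
    (A : Matrix (Fin r) (Fin r) ℝ) (hA : Aᵀ = -A) :
    Matrix.trace ((P * V)ᵀ * (U * A)) + Matrix.trace ((Pᵀ * U)ᵀ * (V * A)) = 0 := by
  set B := Uᵀ * P * V with hB
  have h1 : Matrix.trace ((P * V)ᵀ * (U * A)) = Matrix.trace (Bᵀ * A) := by
    simp [hB, Matrix.transpose_mul, Matrix.mul_assoc]
  have h2 : Matrix.trace ((Pᵀ * U)ᵀ * (V * A)) = Matrix.trace (B * A) := by
    simp [hB, Matrix.transpose_mul, Matrix.mul_assoc]
  have h3 : Matrix.trace (Bᵀ * A) = - Matrix.trace (B * A) := by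
    rw [← Matrix.trace_transpose (Bᵀ * A), Matrix.transpose_mul, Matrix.transpose_transpose,
      hA, Matrix.neg_mul, Matrix.trace_neg, Matrix.trace_mul_comm]
  rw [h1, h2, h3]; ring

lemma hasDerivAt_trace_form {a c : ℕ}
    (X X' Y Y' : ℝ → Matrix (Fin a) (Fin c) ℝ) (A : Matrix (Fin c) (Fin c) ℝ)
    (hX : ∀ i j t, HasDerivAt (fun t => X t i j) (X' t i j) t)
    (hY : ∀ i j t, HasDerivAt (fun t => Y t i j) (Y' t i j) t) (t : ℝ) :
    HasDerivAt (fun t => Matrix.trace ((X t)ᵀ * (Y t * A)))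
      (Matrix.trace ((X' t)ᵀ * (Y t * A)) + Matrix.trace ((X t)ᵀ * (Y' t * A))) t := by
  simp only [trace_tm_sum, Matrix.mul_apply]
  have : (∑ i, ∑ j, X' t i j * ∑ k, Y t i k * A k j)
      + ∑ i, ∑ j, X t i j * ∑ k, Y' t i k * A k j
      = ∑ i, ∑ j, (X' t i j * (∑ k, Y t i k * A k j)
          + X t i j * ∑ k, Y' t i k * A k j) := by
    rw [← Finset.sum_add_distrib]
    congr 1; ext i; rw [← Finset.sum_add_distrib]
  rw [this]
  apply HasDerivAt.fun_sum; intro i _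
  apply HasDerivAt.fun_sum; intro j _
  exact (hX i j t).mul (HasDerivAt.fun_sum fun k _ => (hY i k t).mul_const (A k j))

/-- Momentum conservation laws for two-layer linear networks: if
`Ü + τ(t) U̇ = -∇_U E` and `V̈ + τ(t) V̇ = -∇_V E` with `E (U, V) = L (U Vᵀ)`,
`∇_U E = ∇L(UVᵀ) V`, `∇_V E = ∇L(UVᵀ)ᵀ U` (`G` denotes the gradient of `L` for the
Frobenius inner product `⟨M, N⟩ = Tr (Mᵀ N)`), then for every skew-symmetric `A`,
`t ↦ exp (∫^t τ) (⟨U̇, U A⟩ + ⟨V̇, V A⟩)` is constant, where `T` is a primitive of `τ`. -/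
theorem stmt5 {n m r : ℕ}
    (τ : ℝ → ℝ) (hτ : ContDiff ℝ (⊤ : ℕ∞) τ)
    (T : ℝ → ℝ) (hT : ∀ t, HasDerivAt T (τ t) t)
    (L : Matrix (Fin n) (Fin m) ℝ → ℝ)
    (G : Matrix (Fin n) (Fin m) ℝ → Matrix (Fin n) (Fin m) ℝ)
    (hG : ∀ M H : Matrix (Fin n) (Fin m) ℝ,
      HasDerivAt (fun s : ℝ => L (M + s • H)) (Matrix.trace ((G M)ᵀ * H)) 0)
    (U U' U'' : ℝ → Matrix (Fin n) (Fin r) ℝ)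
    (V V' V'' : ℝ → Matrix (Fin m) (Fin r) ℝ)
    (hU : ∀ i j t, HasDerivAt (fun t => U t i j) (U' t i j) t)
    (hU' : ∀ i j t, HasDerivAt (fun t => U' t i j) (U'' t i j) t)
    (hV : ∀ i j t, HasDerivAt (fun t => V t i j) (V' t i j) t)
    (hV' : ∀ i j t, HasDerivAt (fun t => V' t i j) (V'' t i j) t)
    (odeU : ∀ t, U'' t + τ t • U' t = -(G (U t * (V t)ᵀ) * V t))
    (odeV : ∀ t, V'' t + τ t • V' t = -((G (U t * (V t)ᵀ))ᵀ * U t)) :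
    ∀ A : Matrix (Fin r) (Fin r) ℝ, Aᵀ = -A →
      ∀ t s : ℝ,
        Real.exp (T t) *
            (Matrix.trace ((U' t)ᵀ * (U t * A)) + Matrix.trace ((V' t)ᵀ * (V t * A)))
          = Real.exp (T s) *
            (Matrix.trace ((U' s)ᵀ * (U s * A)) + Matrix.trace ((V' s)ᵀ * (V s * A))) := by
  intro A hA t s
  set g : ℝ → ℝ := fun t => Real.exp (T t) *
      (Matrix.trace ((U' t)ᵀ * (U t * A)) + Matrix.trace ((V' t)ᵀ * (V t * A))) with hg
  suffices h : ∀ x, HasDerivAt g 0 x by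
    exact is_const_of_deriv_eq_zero (fun x => (h x).differentiableAt)
      (fun x => (h x).deriv) t s
  intro x
  set P := G (U x * (V x)ᵀ) with hP
  have hgU := hasDerivAt_trace_form U' U'' U U' A hU' hU x
  have hgV := hasDerivAt_trace_form V' V'' V V' A hV' hV x
  have hexp : HasDerivAt (fun t => Real.exp (T t)) (Real.exp (T x) * τ x) x := (hT x).exp
  have hprod := hexp.mul (hgU.add hgV)
  have hU2 : U'' x = -(P * V x) - τ x • U' x := eq_sub_of_add_eq (odeU x)
  have hV2 : V'' x = -(Pᵀ * U x) - τ x • V' x := eq_sub_of_add_eq (odeV x)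
  have e1 : Matrix.trace ((U'' x)ᵀ * (U x * A))
      = -Matrix.trace ((P * V x)ᵀ * (U x * A))
        - τ x * Matrix.trace ((U' x)ᵀ * (U x * A)) := by
    rw [hU2]
    simp [Matrix.transpose_sub, Matrix.transpose_neg, Matrix.transpose_smul,
      Matrix.sub_mul, Matrix.neg_mul, Matrix.smul_mul, Matrix.trace_sub,
      Matrix.trace_neg, Matrix.trace_smul, smul_eq_mul]
  have e2 : Matrix.trace ((V'' x)ᵀ * (V x * A))
      = -Matrix.trace ((Pᵀ * U x)ᵀ * (V x * A))
        - τ x * Matrix.trace ((V' x)ᵀ * (V x * A)) := by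
    rw [hV2]
    simp [Matrix.transpose_sub, Matrix.transpose_neg, Matrix.transpose_smul,
      Matrix.sub_mul, Matrix.neg_mul, Matrix.smul_mul, Matrix.trace_sub,
      Matrix.trace_neg, Matrix.trace_smul, smul_eq_mul]
  have e3 := trace_skew_self (U' x) A hA
  have e4 := trace_skew_self (V' x) A hA
  have e5 := trace_cross P (U x) (V x) A hA
  refine hprod.congr_deriv ?_
  have h5 : Matrix.trace ((P * V x)ᵀ * (U x * A))
      = -Matrix.trace ((Pᵀ * U x)ᵀ * (V x * A)) := by linarith
  rw [e1, e2, e3, e4, h5, Pi.add_apply]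
  ring
end

section
/- Let U : ℝ → ℝ^{n×r}, V : ℝ → ℝ^{m×r} be C¹ curves with nonnegative-entrywise dynamics given by the mirror gradient flow U̇ = −U ⊙ ∇_U E and V̇ = −V ⊙ ∇_V E, where E(U,V) = L(UVᵀ) for C¹ L : ℝ^{n×m} → ℝ, ⊙ denotes entrywise product, ∇_U E = ∇L(UVᵀ)·V and ∇_V E = [∇L(UVᵀ)]ᵀ·U. Then the row vector 1_nᵀ U − 1_mᵀ V ∈ ℝ^{1×r} is constant in time. -/
open Matrix

/-
Entrywise, `d/dt Σᵢ U i j = -Σᵢ U i j (G V) i j` and `d/dt Σₖ V k j = -Σₖ V k j (Gᵀ U) k j`.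
Both sums equal `Σᵢ Σₖ U i j G i k V k j`, so the column sums of `U` and `V` decrease at the same
rate and their difference has zero derivative.
-/

theorem Matrix.sum_hadamard_mul_eq_sum_hadamard_transpose_mul {ι κ ρ R : Type*}
    [Fintype ι] [Fintype κ] [CommSemiring R]
    (A : Matrix ι κ R) (U : Matrix ι ρ R) (V : Matrix κ ρ R) (j : ρ) :
    ∑ i, (U ⊙ (A * V)) i j = ∑ k, (V ⊙ (Aᵀ * U)) k j := by
  simp only [hadamard_apply, mul_apply, transpose_apply, Finset.mul_sum]
  rw [Finset.sum_comm]
  exact Finset.sum_congr rfl fun _ _ => Finset.sum_congr rfl fun _ _ => by ring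

theorem stmt7_general {n m r : ℕ}
    (G : Matrix (Fin n) (Fin m) ℝ → Matrix (Fin n) (Fin m) ℝ)
    (U U' : ℝ → Matrix (Fin n) (Fin r) ℝ)
    (V V' : ℝ → Matrix (Fin m) (Fin r) ℝ)
    (hU : ∀ i j t, HasDerivAt (fun t => U t i j) (U' t i j) t)
    (hV : ∀ i j t, HasDerivAt (fun t => V t i j) (V' t i j) t)
    (odeU : ∀ t i j, U' t i j = -(U t i j * (G (U t * (V t)ᵀ) * V t) i j))
    (odeV : ∀ t i j, V' t i j = -(V t i j * ((G (U t * (V t)ᵀ))ᵀ * U t) i j)) :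
    ∀ (j : Fin r) (t s : ℝ),
      (∑ i, U t i j) - (∑ i, V t i j) = (∑ i, U s i j) - (∑ i, V s i j) := by
  intro j t s
  have hrate : ∀ τ, (∑ i, U' τ i j) - (∑ k, V' τ k j) = 0 := fun τ => by
    have := sum_hadamard_mul_eq_sum_hadamard_transpose_mul (G (U τ * (V τ)ᵀ)) (U τ) (V τ) j
    simp only [hadamard_apply] at this
    simp only [odeU, odeV, Finset.sum_neg_distrib, this, sub_self]
  have hderiv : ∀ τ, HasDerivAt (fun t => (∑ i, U t i j) - (∑ k, V t k j)) 0 τ := fun τ => by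
    rw [← hrate τ]
    exact (HasDerivAt.fun_sum fun i (_ : i ∈ Finset.univ) => hU i j τ).fun_sub
      (HasDerivAt.fun_sum fun k (_ : k ∈ Finset.univ) => hV k j τ)
  exact is_const_of_deriv_eq_zero (fun τ => (hderiv τ).differentiableAt)
    (fun τ => (hderiv τ).deriv) t s

/-- NMF conservation laws: for the mirror gradient flow `U̇ = -U ⊙ ∇_U E`,
`V̇ = -V ⊙ ∇_V E` with `E (U, V) = L (U Vᵀ)`, `∇_U E = ∇L(UVᵀ) V`,
`∇_V E = ∇L(UVᵀ)ᵀ U` (`G` is the gradient of `L` w.r.t. the Frobenius inner product),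
each entry of the row vector `1ₙᵀ U - 1ₘᵀ V` is constant in time. -/
theorem stmt7 {n m r : ℕ}
    (L : Matrix (Fin n) (Fin m) ℝ → ℝ)
    (G : Matrix (Fin n) (Fin m) ℝ → Matrix (Fin n) (Fin m) ℝ)
    (hG : ∀ M H : Matrix (Fin n) (Fin m) ℝ,
      HasDerivAt (fun s : ℝ => L (M + s • H)) (Matrix.trace ((G M)ᵀ * H)) 0)
    (U U' : ℝ → Matrix (Fin n) (Fin r) ℝ)
    (V V' : ℝ → Matrix (Fin m) (Fin r) ℝ)
    (hU : ∀ i j t, HasDerivAt (fun t => U t i j) (U' t i j) t)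
    (hV : ∀ i j t, HasDerivAt (fun t => V t i j) (V' t i j) t)
    (odeU : ∀ t i j, U' t i j = -(U t i j * (G (U t * (V t)ᵀ) * V t) i j))
    (odeV : ∀ t i j, V' t i j = -(V t i j * ((G (U t * (V t)ᵀ))ᵀ * U t) i j)) :
    ∀ (j : Fin r) (t s : ℝ),
      (∑ i, U t i j) - (∑ i, V t i j) = (∑ i, U s i j) - (∑ i, V s i j) :=
  stmt7_general G U U' V V' hU hV odeU odeV
end

section
/- Let U : ℝ → ℝ^{n×r}, V : ℝ → ℝ^{m×r} be C¹ solutions of the Euclidean gradient flow U̇ = −∇_U E, V̇ = −∇_V E with E(U,V) = L(UVᵀ), L ∈ C¹. Then for every symmetric matrix A ∈ ℝ^{r×r}, the function t ↦ ⟨U, UA⟩ − ⟨V, VA⟩ is constant, where ⟨M,N⟩ = Tr(MᵀN). Equivalently, UᵀU − VᵀV is constant in time. -/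
/-!
Along the flow `U̇ = -G V`, `V̇ = -Gᵀ U` both `d/dt (UᵀU)` and `d/dt (VᵀV)` equal
`-(UᵀGV + VᵀGᵀU)`, so `UᵀU - VᵀV` has zero derivative and is constant. The trace form follows
from `⟨U, UA⟩ - ⟨V, VA⟩ = tr ((UᵀU - VᵀV) A)`.
-/

open Matrix

namespace Matrix

variable {ι κ μ : Type*}

theorem hasDerivAt_transpose_mul_apply [Fintype ι] {X : ℝ → Matrix ι κ ℝ}
    {Y : ℝ → Matrix ι μ ℝ} {X' : Matrix ι κ ℝ} {Y' : Matrix ι μ ℝ} {t : ℝ}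
    (hX : ∀ a b, HasDerivAt (fun s => X s a b) (X' a b) t)
    (hY : ∀ a b, HasDerivAt (fun s => Y s a b) (Y' a b) t) (i : κ) (j : μ) :
    HasDerivAt (fun s => ((X s)ᵀ * Y s) i j) ((X'ᵀ * Y t + (X t)ᵀ * Y') i j) t := by
  simp only [mul_apply, transpose_apply, add_apply, ← Finset.sum_add_distrib]
  exact HasDerivAt.fun_sum fun k _ => (hX k i).mul (hY k j)

theorem eq_of_hasDerivAt_apply_zero {F : ℝ → Matrix ι κ ℝ}
    (hF : ∀ i j t, HasDerivAt (fun s => F s i j) 0 t) (t s : ℝ) : F t = F s := by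
  ext i j
  exact is_const_of_deriv_eq_zero (fun x => (hF i j x).differentiableAt)
    (fun x => (hF i j x).deriv) t s

theorem trace_transpose_mul_mul_sub [Fintype ι] [Fintype κ] [Fintype μ] {R : Type*}
    [CommRing R] (X : Matrix ι κ R) (Y : Matrix μ κ R) (A : Matrix κ κ R) :
    trace (Xᵀ * (X * A)) - trace (Yᵀ * (Y * A)) = trace ((Xᵀ * X - Yᵀ * Y) * A) := by
  rw [sub_mul, trace_sub, Matrix.mul_assoc, Matrix.mul_assoc]

theorem transpose_mul_add_transpose_mul_gradient_eq [Fintype ι] [Fintype κ] {R : Type*}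
    [CommRing R] (G : Matrix ι κ R) (U : Matrix ι μ R) (V : Matrix κ μ R) :
    (-(G * V))ᵀ * U + Uᵀ * -(G * V) = (-(Gᵀ * U))ᵀ * V + Vᵀ * -(Gᵀ * U) := by
  simp only [transpose_neg, transpose_mul, transpose_transpose, Matrix.neg_mul,
    Matrix.mul_neg, Matrix.mul_assoc]
  abel

end Matrix

theorem stmt19_general {n m r : ℕ}
    (G : Matrix (Fin n) (Fin m) ℝ → Matrix (Fin n) (Fin m) ℝ)
    (U U' : ℝ → Matrix (Fin n) (Fin r) ℝ)
    (V V' : ℝ → Matrix (Fin m) (Fin r) ℝ)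
    (hU : ∀ i j t, HasDerivAt (fun t => U t i j) (U' t i j) t)
    (hV : ∀ i j t, HasDerivAt (fun t => V t i j) (V' t i j) t)
    (odeU : ∀ t, U' t = -(G (U t * (V t)ᵀ) * V t))
    (odeV : ∀ t, V' t = -((G (U t * (V t)ᵀ))ᵀ * U t)) :
    (∀ A : Matrix (Fin r) (Fin r) ℝ, Aᵀ = A →
      ∀ t s : ℝ,
        Matrix.trace ((U t)ᵀ * (U t * A)) - Matrix.trace ((V t)ᵀ * (V t * A))
          = Matrix.trace ((U s)ᵀ * (U s * A)) - Matrix.trace ((V s)ᵀ * (V s * A))) ∧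
    (∀ t s : ℝ, (U t)ᵀ * U t - (V t)ᵀ * V t = (U s)ᵀ * U s - (V s)ᵀ * V s) := by
  have hgram : ∀ i j t, HasDerivAt (fun s => ((U s)ᵀ * U s - (V s)ᵀ * V s) i j) 0 t := by
    intro i j t
    have h := (hasDerivAt_transpose_mul_apply (hU · · t) (hU · · t) i j).sub
      (hasDerivAt_transpose_mul_apply (hV · · t) (hV · · t) i j)
    rwa [← Matrix.sub_apply, odeU, odeV, transpose_mul_add_transpose_mul_gradient_eq, sub_self,
      Matrix.zero_apply] at h
  have hconst := eq_of_hasDerivAt_apply_zero hgram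
  refine ⟨fun A _ t s => ?_, hconst⟩
  rw [trace_transpose_mul_mul_sub, trace_transpose_mul_mul_sub, hconst t s]

/-- Balancedness conservation for the Euclidean gradient flow of a two-layer linear
network: if `U̇ = -∇_U E`, `V̇ = -∇_V E` with `E (U, V) = L (U Vᵀ)` (`G` the gradient of
`L` for the Frobenius inner product), then `UᵀU - VᵀV` is constant in time; equivalently,
for every symmetric `A`, `⟨U, U A⟩ - ⟨V, V A⟩` is constant. -/
theorem stmt19 {n m r : ℕ}
    (L : Matrix (Fin n) (Fin m) ℝ → ℝ)
    (G : Matrix (Fin n) (Fin m) ℝ → Matrix (Fin n) (Fin m) ℝ)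
    (hG : ∀ M H : Matrix (Fin n) (Fin m) ℝ,
      HasDerivAt (fun s : ℝ => L (M + s • H)) (Matrix.trace ((G M)ᵀ * H)) 0)
    (U U' : ℝ → Matrix (Fin n) (Fin r) ℝ)
    (V V' : ℝ → Matrix (Fin m) (Fin r) ℝ)
    (hU : ∀ i j t, HasDerivAt (fun t => U t i j) (U' t i j) t)
    (hV : ∀ i j t, HasDerivAt (fun t => V t i j) (V' t i j) t)
    (odeU : ∀ t, U' t = -(G (U t * (V t)ᵀ) * V t))
    (odeV : ∀ t, V' t = -((G (U t * (V t)ᵀ))ᵀ * U t)) :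
    (∀ A : Matrix (Fin r) (Fin r) ℝ, Aᵀ = A →
      ∀ t s : ℝ,
        Matrix.trace ((U t)ᵀ * (U t * A)) - Matrix.trace ((V t)ᵀ * (V t * A))
          = Matrix.trace ((U s)ᵀ * (U s * A)) - Matrix.trace ((V s)ᵀ * (V s * A))) ∧
    (∀ t s : ℝ, (U t)ᵀ * U t - (V t)ᵀ * V t = (U s)ᵀ * U s - (V s)ᵀ * V s) :=
  stmt19_general G U U' V V' hU hV odeU odeV
end
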